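/- Let X be a set, I a nonempty finite set, and (f_i)_{i∈I} a family of functions f_i : X → X having attractor A. Then for every infinite word α ∈ Λ(I), ⋂_{n∈ℕ} X̃_{[α]_n} = {a_α}, where X̃_β = X_β ∪ Y_β for every finite word β. -/
import Mathlib


open Filter Topology Set

/-- `φ : [0,∞) → [0,∞)` is a comparison function: it maps `[0,∞)` into `[0,∞)`,
is increasing, satisfies `φ t < t` for `t > 0`, and is right-continuous. -/
def IsComparisonFn (φ : ℝ → ℝ) : Prop :=
  (∀ t : ℝ, 0 ≤ t → 0 ≤ φ t) ∧
  MonotoneOn φ (Set.Ici (0 : ℝ)) ∧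
  (∀ t : ℝ, 0 < t → φ t < t) ∧
  (∀ t : ℝ, 0 ≤ t → ContinuousWithinAt φ (Set.Ici t) t)

/-- `f_{α₁…αₙ} = f_{α₁} ∘ f_{α₂} ∘ … ∘ f_{αₙ}` (the identity for the empty word). -/
def WordMap {X I : Type*} (f : I → X → X) : List I → X → X
  | [] => id
  | i :: w => f i ∘ WordMap f w

/-- `[α]_n`: the finite word consisting of the first `n` letters of the infinite word `α`. -/
def Pref {I : Type*} (α : ℕ → I) (n : ℕ) : List I := List.ofFn (fun k : Fin n => α (k : ℕ))

/-- `X_w = f_w(X)`, the image of the whole space under the word map. -/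
def WordSet {X I : Type*} (f : I → X → X) (w : List I) : Set X := Set.range (WordMap f w)

/-- A family `(f_i)_{i ∈ I}` of self-maps of `X` has attractor if:
(a) for every infinite word `α`, `⋂ₙ X_{[α]ₙ}` has a unique element `a_α`;
(b) whenever `a_α ≠ a_β`, some `X_{[α]_{n₀}}` and `X_{[β]_{n₀}}` are disjoint. -/
def HasAttractor {X I : Type*} (f : I → X → X) : Prop :=
  (∀ α : ℕ → I, ∃! a : X, ∀ n : ℕ, a ∈ WordSet f (Pref α n)) ∧
  (∀ α β : ℕ → I, ∀ a b : X,
    (∀ n : ℕ, a ∈ WordSet f (Pref α n)) → (∀ n : ℕ, b ∈ WordSet f (Pref β n)) →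
    a ≠ b →
    ∃ n₀ : ℕ, WordSet f (Pref α n₀) ∩ WordSet f (Pref β n₀) = ∅)

/-- Given a selection `a` of the points `a_β`,
`Y_w = {a_β : β ∈ Λ(I), X_w ∩ X_{[β]ₙ} ≠ ∅ for every n}`. -/
def YSet {X I : Type*} (f : I → X → X) (a : (ℕ → I) → X) (w : List I) : Set X :=
  {y | ∃ β : ℕ → I, y = a β ∧ ∀ n : ℕ, (WordSet f w ∩ WordSet f (Pref β n)).Nonempty}

/-- `X̃_w = X_w ∪ Y_w`. -/
def XtSet {X I : Type*} (f : I → X → X) (a : (ℕ → I) → X) (w : List I) : Set X :=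
  WordSet f w ∪ YSet f a w

lemma wordMap_append {X I : Type*} (f : I → X → X) (w v : List I) :
    WordMap f (w ++ v) = WordMap f w ∘ WordMap f v := by
  induction w with
  | nil => rfl
  | cons i w ih => simp [WordMap, ih, Function.comp_assoc]

lemma pref_succ {I : Type*} (α : ℕ → I) (n : ℕ) :
    Pref α (n + 1) = Pref α n ++ [α n] := by
  rw [Pref, List.ofFn_succ', List.concat_eq_append]
  rfl

lemma wordSet_antitone {X I : Type*} (f : I → X → X) (α : ℕ → I) {m n : ℕ} (h : m ≤ n) :
    WordSet f (Pref α n) ⊆ WordSet f (Pref α m) := by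
  induction n, h using Nat.le_induction with
  | base => exact subset_rfl
  | succ n hmn ih =>
    refine subset_trans ?_ ih
    rw [pref_succ, WordSet, wordMap_append]
    exact Set.range_comp_subset_range _ _

/-- **Proposition 3.7 b).** `⋂ₙ X̃_{[α]ₙ} = {a_α}` for every infinite word `α`. -/
theorem iInter_XtSet_eq_singleton {X I : Type*} [Finite I] [Nonempty I]
    (f : I → X → X) (hF : HasAttractor f)
    (a : (ℕ → I) → X) (ha : ∀ (α : ℕ → I) (n : ℕ), a α ∈ WordSet f (Pref α n)) :
    ∀ α : ℕ → I, ⋂ n : ℕ, XtSet f a (Pref α n) = {a α} := by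
  obtain ⟨hex, hsep⟩ := hF
  intro α
  apply Set.eq_singleton_iff_unique_mem.mpr
  refine ⟨Set.mem_iInter.mpr fun n => Or.inl (ha α n), ?_⟩
  intro x hx
  rw [Set.mem_iInter] at hx
  by_contra hne
  have hnotall : ¬ ∀ n, x ∈ WordSet f (Pref α n) := fun h =>
    hne ((hex α).unique h (ha α))
  push_neg at hnotall
  obtain ⟨m, hm⟩ := hnotall
  -- key step: for every k there is a branch β matching x whole whose sets meet X_{[α]_k}
  have key : ∀ k, ∃ β : ℕ → I, (∀ j, x ∈ WordSet f (Pref β j)) ∧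
      ∀ j, (WordSet f (Pref α k) ∩ WordSet f (Pref β j)).Nonempty := by
    intro k
    rcases le_or_gt k m with hkm | hmk
    · rcases hx m with hX | hY
      · exact absurd hX hm
      · obtain ⟨β, hxb, hβ⟩ := hY
        refine ⟨β, fun j => hxb ▸ ha β j, fun j => ?_⟩
        exact (hβ j).mono (Set.inter_subset_inter_left _ (wordSet_antitone f α hkm))
    · rcases hx k with hX | hY
      · exact absurd (wordSet_antitone f α hmk.le hX) hm
      · obtain ⟨β, hxb, hβ⟩ := hY
        exact ⟨β, fun j => hxb ▸ ha β j, hβ⟩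
  choose B hB1 hB2 using key
  -- ultrafilter selection of a limit branch γ
  let U : Ultrafilter ℕ := Ultrafilter.of Filter.atTop
  have hU : ∀ s ∈ (Filter.atTop : Filter ℕ), s ∈ U := fun s hs => Ultrafilter.of_le _ hs
  have hsel : ∀ n : ℕ, ∃ i : I, {k | B k n = i} ∈ U := by
    intro n
    by_contra h
    push_neg at h
    have hc : ∀ i : I, {k | B k n = i}ᶜ ∈ U := fun i =>
      Ultrafilter.compl_mem_iff_notMem.mpr (h i)
    have h2 : (⋂ i : I, {k | B k n = i}ᶜ) ∈ U := Filter.iInter_mem.mpr hc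
    have h3 : (⋂ i : I, {k | B k n = i}ᶜ) = ∅ := by
      ext k; simp
    rw [h3] at h2
    exact Filter.empty_notMem (U : Filter ℕ) h2
  choose γ hγ using hsel
  have hfin : ∀ M : ℕ, ∃ k, M ≤ k ∧ ∀ n < M, B k n = γ n := by
    intro M
    have h1 : {k | M ≤ k} ∈ U := hU _ (Filter.mem_atTop M)
    have h2 : (⋂ n : Fin M, {k | B k (n : ℕ) = γ (n : ℕ)}) ∈ U :=
      Filter.iInter_mem.mpr fun n => hγ (n : ℕ)
    obtain ⟨k, hk⟩ := Filter.nonempty_of_mem (U.toFilter.inter_mem h1 h2)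
    exact ⟨k, hk.1, fun n hn => Set.mem_iInter.mp hk.2 ⟨n, hn⟩⟩
  have hprefeq : ∀ (k j : ℕ), (∀ n < j, B k n = γ n) → Pref (B k) j = Pref γ j := by
    intro k j h
    unfold Pref
    exact congrArg _ (funext fun n => h n n.isLt)
  have hγ1 : ∀ j, x ∈ WordSet f (Pref γ j) := by
    intro j
    obtain ⟨k, hk1, hk2⟩ := hfin j
    rw [← hprefeq k j hk2]
    exact hB1 k j
  have hγ2 : ∀ j, (WordSet f (Pref α j) ∩ WordSet f (Pref γ j)).Nonempty := by
    intro j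
    obtain ⟨k, hk1, hk2⟩ := hfin j
    have h := hB2 k j
    rw [hprefeq k j hk2] at h
    exact h.mono (Set.inter_subset_inter_left _ (wordSet_antitone f α hk1))
  obtain ⟨n₀, hn₀⟩ := hsep α γ (a α) x (ha α) hγ1 (fun h => hne h.symm)
  obtain ⟨y, hy⟩ := hγ2 n₀
  rw [hn₀] at hy
  exact hy
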